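/- Let G^i be a fixed graph on n vertices with m^i ≥ 1 edges and edge indicator vector p^i, and let p^j be the edge indicator vector of an independent Erdős–Rényi G(n, m^j) random graph with m^j ≥ 1. With OE = (p^i)'p^j / sqrt(m^i m^j), the second moment satisfies E[OE²] = 2/(n(n-1)) + 4(m^i − 1)(m^j − 1)/(n(n-2)(n²-1)). -/

import Mathlib

/-!
For a uniformly random `m`-subset `s` of an `N`-set, `X = #(A ∩ s)` is hypergeometric. Double
counting the pairs `(t, s)` with `t ⊆ A ∩ s` and `#t = j` gives its binomial moments
`C(N, j) · E[C(X, j)] = C(#A, j) · C(m, j)`. The cases `j = 1, 2` give `E[X²]`, and after dividing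
by `mi · mj` the second moment of the overlap is `1/N + (mi - 1)(mj - 1)/(N(N - 1))`, which is the
claimed expression because `2N = n(n - 1)`.
-/

open Finset

noncomputable def erExpect (N m : ℕ) (f : Finset (Fin N) → ℝ) : ℝ :=
  (∑ s ∈ (univ : Finset (Fin N)).powersetCard m, f s) / (N.choose m)

section Hypergeometric

variable {α : Type*} [DecidableEq α] [Fintype α]

theorem sum_choose_card_inter_powersetCard (A : Finset α) {m j : ℕ} (hjm : j ≤ m) :
    ∑ s ∈ univ.powersetCard m, (#(A ∩ s)).choose j =
      (#A).choose j * (Fintype.card α - j).choose (m - j) := by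
  have hsubsets : ∀ s : Finset α, (A ∩ s).powersetCard j = {t ∈ A.powersetCard j | t ⊆ s} := by
    intro s; ext t
    simp only [mem_powersetCard, subset_inter_iff, mem_filter]
    tauto
  have hsupersets : ∀ t ∈ A.powersetCard j,
      #{s ∈ univ.powersetCard m | t ⊆ s} = (Fintype.card α - j).choose (m - j) := by
    intro t ht
    obtain ⟨-, htj⟩ := mem_powersetCard.1 ht
    rw [card_filter_powersetCard_subset t univ m (subset_univ t) (htj ▸ hjm), card_univ, htj]
  calc ∑ s ∈ univ.powersetCard m, (#(A ∩ s)).choose j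
      = ∑ s ∈ univ.powersetCard m, #{t ∈ A.powersetCard j | t ⊆ s} := by
        simp only [← card_powersetCard, hsubsets]
    _ = ∑ t ∈ A.powersetCard j, #{s ∈ univ.powersetCard m | t ⊆ s} :=
        sum_card_bipartiteAbove_eq_sum_card_bipartiteBelow _
    _ = (#A).choose j * (Fintype.card α - j).choose (m - j) := by
        rw [sum_congr rfl hsupersets, sum_const, card_powersetCard, smul_eq_mul]

theorem choose_mul_sum_choose_card_inter_powersetCard (A : Finset α) (m j : ℕ) :
    (Fintype.card α).choose j * ∑ s ∈ univ.powersetCard m, (#(A ∩ s)).choose j =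
      (#A).choose j * m.choose j * (Fintype.card α).choose m := by
  rcases le_or_gt j m with hjm | hmj
  · rw [sum_choose_card_inter_powersetCard A hjm, mul_left_comm, ← Nat.choose_mul hjm]
    ring
  · have hzero : ∀ s ∈ univ.powersetCard m, (#(A ∩ s)).choose j = 0 := fun s hs =>
      Nat.choose_eq_zero_of_lt <|
        (card_le_card inter_subset_right).trans_lt ((mem_powersetCard_univ.1 hs) ▸ hmj)
    rw [sum_eq_zero hzero, Nat.choose_eq_zero_of_lt hmj]
    simp

theorem sum_sq_card_inter_powersetCard {K : Type*} [Field K] [CharZero K] (A : Finset α)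
    (m : ℕ) :
    (Fintype.card α : K) * (Fintype.card α - 1) * ∑ s ∈ univ.powersetCard m, (#(A ∩ s) : K) ^ 2 =
      #A * m * (Fintype.card α - 1 + (#A - 1) * (m - 1)) * (Fintype.card α).choose m := by
  have hfirst : (Fintype.card α : K) * ∑ s ∈ univ.powersetCard m, (#(A ∩ s) : K) =
      #A * m * (Fintype.card α).choose m := by
    have h := choose_mul_sum_choose_card_inter_powersetCard A m 1
    simp only [Nat.choose_one_right] at h
    exact_mod_cast h
  have hsecond : ((Fintype.card α).choose 2 : K) *
      ∑ s ∈ univ.powersetCard m, ((#(A ∩ s)).choose 2 : K) =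
      (#A).choose 2 * m.choose 2 * (Fintype.card α).choose m := by
    exact_mod_cast choose_mul_sum_choose_card_inter_powersetCard A m 2
  simp only [Nat.cast_choose_two K (Fintype.card α), Nat.cast_choose_two K #A,
    Nat.cast_choose_two K m] at hsecond
  have hsq : ∀ s : Finset α, (#(A ∩ s) : K) ^ 2 = 2 * ((#(A ∩ s)).choose 2 : K) + #(A ∩ s) := by
    intro s
    rw [Nat.cast_choose_two]
    ring
  rw [sum_congr rfl fun s _ => hsq s, sum_add_distrib, ← mul_sum]
  linear_combination 4 * hsecond + (Fintype.card α - 1 : K) * hfirst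

end Hypergeometric

theorem er_overlap_second_moment_general (n N mi mj : ℕ) (hn : 3 ≤ n)
    (hN : 2 * N = n * (n - 1)) (hmi : 1 ≤ mi)
    (hmj : 1 ≤ mj) (hmjN : mj ≤ N) (A : Finset (Fin N)) (hA : A.card = mi) :
    erExpect N mj (fun s => (((A ∩ s).card : ℝ) / Real.sqrt (mi * mj)) ^ 2) =
      2 / ((n : ℝ) * ((n : ℝ) - 1)) +
        4 * ((mi : ℝ) - 1) * ((mj : ℝ) - 1) /
          ((n : ℝ) * ((n : ℝ) - 2) * ((n : ℝ) ^ 2 - 1)) := by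
  have hn' : (3 : ℝ) ≤ n := by exact_mod_cast hn
  have hN' : 2 * (N : ℝ) = n * (n - 1) := by
    have h := congrArg (Nat.cast : ℕ → ℝ) hN
    push_cast [Nat.cast_sub (by omega : 1 ≤ n)] at h
    exact h
  have hN3 : (3 : ℝ) ≤ N := by nlinarith
  have hN0 : (N : ℝ) ≠ 0 := by positivity
  have hN1 : (N : ℝ) - 1 ≠ 0 := by linarith
  have hdenom : (N : ℝ) * (N - 1) * 4 = n * (n - 2) * (n ^ 2 - 1) := by
    linear_combination (2 * N + n * (n - 1) - 2) * hN'
  have hmoment := sum_sq_card_inter_powersetCard (K := ℝ) A mj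
  rw [Fintype.card_fin, hA] at hmoment
  have hC : (N.choose mj : ℝ) ≠ 0 := by exact_mod_cast (Nat.choose_pos hmjN).ne'
  have hmi' : (mi : ℝ) ≠ 0 := by positivity
  have hmj' : (mj : ℝ) ≠ 0 := by positivity
  have hsqrt : √((mi : ℝ) * mj) ^ 2 = mi * mj := Real.sq_sqrt (by positivity)
  unfold erExpect
  simp only [div_pow, hsqrt, ← sum_div]
  rw [← hN', ← hdenom]
  field_simp
  linear_combination hmoment

/-- Second moment of the cosine overlap `OE = (p^i)'p^j / √(mi·mj)` between a fixed
`mi`-edge graph (edge set `A`) and a `G(n,mj)` random graph: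
`E[OE²] = 2/(n(n-1)) + 4(mi−1)(mj−1)/(n(n-2)(n²-1))`. -/
theorem er_overlap_second_moment (n N mi mj : ℕ) (hn : 3 ≤ n)
    (hN : 2 * N = n * (n - 1)) (hmi : 1 ≤ mi) (hmiN : mi ≤ N)
    (hmj : 1 ≤ mj) (hmjN : mj ≤ N) (A : Finset (Fin N)) (hA : A.card = mi) :
    erExpect N mj (fun s => (((A ∩ s).card : ℝ) / Real.sqrt (mi * mj)) ^ 2) =
      2 / ((n : ℝ) * ((n : ℝ) - 1)) +
        4 * ((mi : ℝ) - 1) * ((mj : ℝ) - 1) /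
          ((n : ℝ) * ((n : ℝ) - 2) * ((n : ℝ) ^ 2 - 1)) :=
  er_overlap_second_moment_general n N mi mj hn hN hmi hmj hmjN A hA
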